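/- arXiv:2005.08814 — 2 statements merged into one kernel-verified Lean document; each statement's English description precedes it below -/
import Mathlib

section
/- For every 0<α<1 there exists a constant C=C(α)>1 such that the following holds. Let β∈ℝ, z(s)=βs+z̃(s) with z̃∈C(ℝ), and let c∈C(ℝ) with ‖c‖_∞≤1. Define Φ(ξ,s)=K(Z(ξ,s)+c(s)/ξ)−K(Z(ξ,s)), where K(x)=1/(1+x²) and Z(ξ,s)=(z(s)−z(s−ξ))/ξ. Then for every f∈C*^{1,α}(ℝ), the principal value defining T_Φ(f) exists and ‖T_Φ(f)‖₀* ≤ C·‖f‖_{1,α}*·‖c‖_∞^α. -/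
/-!
The integrand is `((f'(s-ξ) - f'(s))/ξ) · Φ(ξ,s)`. Since `0 < K ≤ 1` and `K` is 1-Lipschitz,
`|Φ(ξ,s)| ≤ min(1, b/|ξ|)` with `b = min(‖c‖_∞, 1)`. For `|ξ| ≤ 1` the weighted Hölder bound on `f'`
controls the difference quotient; for `|ξ| > 1` the weighted decay of `f'` does, after the
estimate `1 + |s|^{1+α} ≤ 2(1 + |s-ξ|^{1+α}) + 2|ξ|^{1+α}` moves the weight from `s` to `s - ξ`.
Together this dominates the weighted integrand by a majorant whose `ξ`-integral is `O(b^α)`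
uniformly in `s`. So the integral converges absolutely, the principal value is an ordinary
Lebesgue integral, and its weighted sup norm is `O(b^α ‖f‖_{1,α}*)`.
-/

open MeasureTheory Filter Topology Set
open scoped ENNReal

noncomputable section

/-- Weighted sup norm `‖f‖₀* = sup_s (1+|s|^{1+α})|f(s)|`. -/
def wSup (α : ℝ) (f : ℝ → ℝ) : ℝ≥0∞ :=
  ⨆ s : ℝ, ENNReal.ofReal ((1 + |s| ^ (1 + α)) * |f s|)

/-- Weighted Hölder seminorm `[f]_α*`. -/
def wHolder (α : ℝ) (f : ℝ → ℝ) : ℝ≥0∞ :=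
  ⨆ s : ℝ, ⨆ ξ : {ξ : ℝ // 0 < |ξ| ∧ |ξ| ≤ 1},
    ENNReal.ofReal ((1 + |s| ^ (1 + α)) * |f (s - ξ.1) - f s| / |ξ.1| ^ α)

/-- Weighted norm `‖f‖_{k,α}*`. -/
def wNorm (α : ℝ) (k : ℕ) (f : ℝ → ℝ) : ℝ≥0∞ :=
  (⨆ s : ℝ, ⨆ j : Fin (k + 1),
      ENNReal.ofReal ((1 + |s| ^ (1 + α)) * |iteratedDeriv j.1 f s|))
    + wHolder α (iteratedDeriv k f)

/-- Membership in the weighted Hölder space `C*^{k,α}(ℝ)`. -/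
def CStar (α : ℝ) (k : ℕ) (f : ℝ → ℝ) : Prop :=
  ContDiff ℝ k f ∧ wNorm α k f < ⊤

/-- Truncated singular integral defining `T_Φ(g)(s)`; the operator value is its
limit as `R → ∞`. -/
def TInt (Φ : ℝ → ℝ → ℝ) (g : ℝ → ℝ) (s R : ℝ) : ℝ :=
  (1 / (2 * Real.pi)) * ∫ ξ in (-R)..R, ((deriv g (s - ξ) - deriv g s) / ξ) * Φ ξ s

/-- `K(x) = 1/(1+x²)`. -/
def Kf (x : ℝ) : ℝ := 1 / (1 + x ^ 2)

/-- `Z(ξ,s) = (z(s) - z(s-ξ))/ξ`. -/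
def Zf (z : ℝ → ℝ) (ξ s : ℝ) : ℝ := (z s - z (s - ξ)) / ξ

/-- `σ(a) = (1-a²)/(1+a²)²`. -/
def sigmaF (a : ℝ) : ℝ := (1 - a ^ 2) / (1 + a ^ 2) ^ 2

/-- `s ↦ βs + f(s)`. -/
def lineFun (β : ℝ) (f : ℝ → ℝ) (s : ℝ) : ℝ := β * s + f s

/-- `(s,t) ↦ βs + f(s,t)`. -/
def lineFun2 (β : ℝ) (f : ℝ → ℝ → ℝ) (s t : ℝ) : ℝ := β * s + f s t

theorem add_rpow_le_two_mul_add_rpow {a b p : ℝ} (ha : 0 ≤ a) (hb : 0 ≤ b) (hp1 : 1 ≤ p)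
    (hp2 : p ≤ 2) : (a + b) ^ p ≤ 2 * (a ^ p + b ^ p) := by
  have h : (a + b) ^ p ≤ 2 ^ (p - 1) * (a ^ p + b ^ p) := by
    exact_mod_cast NNReal.rpow_add_le_mul_rpow_add_rpow ⟨a, ha⟩ ⟨b, hb⟩ hp1
  have h2 : (2 : ℝ) ^ (p - 1) ≤ 2 := by
    simpa using Real.rpow_le_rpow_of_exponent_le one_le_two (by linarith : p - 1 ≤ 1)
  exact h.trans (by gcongr)

theorem integrable_comp_abs {E : Type*} [NormedAddCommGroup E] {g : ℝ → E}
    (hg : IntegrableOn g (Ioi 0)) : Integrable fun x => g |x| := by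
  have hpos : IntegrableOn (fun x => g |x|) (Ioi 0) :=
    hg.congr_fun (fun x hx => by rw [abs_of_pos (mem_Ioi.1 hx)]) measurableSet_Ioi
  have hneg : IntegrableOn (fun x => g |x|) (Iic 0) := by
    have h : IntegrableOn (fun x => g |x|) (Ici (-0)) := by
      rw [neg_zero]; exact Iff.mpr integrableOn_Ici_iff_integrableOn_Ioi hpos
    simpa only [abs_neg] using h.comp_neg_Iic
  rw [← integrableOn_univ, ← Iic_union_Ioi (a := (0 : ℝ))]
  exact hneg.union hpos

def weight (α t : ℝ) : ℝ := 1 + |t| ^ (1 + α)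

theorem one_le_weight (α t : ℝ) : 1 ≤ weight α t :=
  le_add_of_nonneg_right (by positivity)

theorem weight_pos (α t : ℝ) : 0 < weight α t :=
  one_pos.trans_le (one_le_weight α t)

theorem weight_le_two_mul_weight_sub {α : ℝ} (hα0 : 0 ≤ α) (hα1 : α ≤ 1) (s ξ : ℝ) :
    weight α s ≤ 2 * weight α (s - ξ) + 2 * |ξ| ^ (1 + α) := by
  have h : |s| ^ (1 + α) ≤ 2 * (|s - ξ| ^ (1 + α) + |ξ| ^ (1 + α)) :=
    calc |s| ^ (1 + α) ≤ (|s - ξ| + |ξ|) ^ (1 + α) := by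
          gcongr; simpa using abs_add_le (s - ξ) ξ
      _ ≤ _ := add_rpow_le_two_mul_add_rpow (abs_nonneg _) (abs_nonneg _) (by linarith)
          (by linarith)
  unfold weight
  linarith

theorem integrable_inv_weight {α : ℝ} (hα0 : 0 < α) (hα1 : α ≤ 1) :
    Integrable fun t => (weight α t)⁻¹ := by
  have hdom := (integrable_one_add_norm (E := ℝ) (μ := volume) (r := 1 + α)
    (by simp; linarith)).const_mul 2
  refine hdom.mono' (Measurable.aestronglyMeasurable (by unfold weight; fun_prop))
    (ae_of_all _ fun t => ?_)
  have h := add_rpow_le_two_mul_add_rpow zero_le_one (abs_nonneg t) (by linarith)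
    (by linarith : 1 + α ≤ 2)
  rw [Real.one_rpow] at h
  simp only [norm_inv, Real.norm_eq_abs, abs_of_pos (weight_pos α t)]
  rw [Real.rpow_neg (by positivity : (0 : ℝ) ≤ 1 + |t|)]
  calc (weight α t)⁻¹ = 2 * (2 * weight α t)⁻¹ := by field_simp
    _ ≤ 2 * ((1 + |t|) ^ (1 + α))⁻¹ := by gcongr; exact h

section WeightedNorm

variable {α : ℝ} {f : ℝ → ℝ}

theorem weight_mul_abs_deriv_le_wNorm (hf : wNorm α 1 f ≠ ⊤) (t : ℝ) :
    weight α t * |deriv f t| ≤ (wNorm α 1 f).toReal := by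
  refine (ENNReal.ofReal_le_iff_le_toReal hf).1 (le_trans ?_ le_self_add)
  refine le_trans ?_ (le_iSup _ t)
  simpa [weight] using
    le_iSup (fun j : Fin 2 => ENNReal.ofReal (weight α t * |iteratedDeriv j.1 f t|)) 1

theorem weight_mul_abs_deriv_sub_le_wNorm (hf : wNorm α 1 f ≠ ⊤) (s : ℝ) {ξ : ℝ}
    (hξ0 : 0 < |ξ|) (hξ1 : |ξ| ≤ 1) :
    weight α s * |deriv f (s - ξ) - deriv f s| ≤ (wNorm α 1 f).toReal * |ξ| ^ α := by
  rw [← div_le_iff₀ (by positivity)]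
  refine (ENNReal.ofReal_le_iff_le_toReal hf).1 (le_trans ?_ le_add_self)
  refine le_trans ?_ (le_iSup _ s)
  simpa [weight] using le_iSup (fun ξ' : {ξ : ℝ // 0 < |ξ| ∧ |ξ| ≤ 1} =>
    ENNReal.ofReal (weight α s * |deriv f (s - ξ'.1) - deriv f s| / |ξ'.1| ^ α)) ⟨ξ, hξ0, hξ1⟩

end WeightedNorm

/-- The three pieces come from `|ξ| ≤ b` (Hölder bound, `|Φ| ≤ 1`), `b < |ξ| ≤ 1` (Hölder bound,
`|Φ| ≤ b/|ξ|`) and `|ξ| > 1` (decay of `f'`, `|Φ| ≤ b/|ξ|`). -/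
def majorant (α b t : ℝ) : ℝ :=
  (Ioc 0 b).indicator (fun t => t ^ (α - 1)) t + (Ioc b 1).indicator (fun t => b * t ^ (α - 2)) t
    + (Ioi 1).indicator (fun t => 3 * b ^ α * t ^ (-2 : ℝ)) t

def singularConst (α : ℝ) : ℝ := 2 * (1 / α + 1 / (1 - α) + 3 + ∫ t, (weight α t)⁻¹)

section Majorant

variable {α b t : ℝ}

theorem majorant_of_le (ht : 0 < t) (htb : t ≤ b) (hb1 : b ≤ 1) :
    majorant α b t = t ^ (α - 1) := by
  have : ¬ 1 < t := by linarith
  simp [majorant, ht, htb, this]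

theorem majorant_of_lt_of_le (hbt : b < t) (ht1 : t ≤ 1) :
    majorant α b t = b * t ^ (α - 2) := by
  have : ¬ 1 < t := by linarith
  simp [majorant, hbt, ht1, this, not_le.2 hbt]

theorem majorant_of_one_lt (hb1 : b ≤ 1) (ht : 1 < t) :
    majorant α b t = 3 * b ^ α * t ^ (-2 : ℝ) := by
  have : ¬ t ≤ b := by linarith
  simp [majorant, ht, this, not_le.2 ht]

theorem majorant_of_nonpos (hb : 0 ≤ b) (ht : t ≤ 0) : majorant α b t = 0 := by
  have h1 : ¬ 0 < t := by linarith
  have h2 : ¬ b < t := by linarith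
  have h3 : ¬ 1 < t := by linarith
  simp [majorant, h1, h2, h3]

theorem integrable_majorant_terms (hα0 : 0 < α) (hb : 0 ≤ b) :
    Integrable ((Ioc 0 b).indicator fun t => t ^ (α - 1)) ∧
      Integrable ((Ioc b 1).indicator fun t => b * t ^ (α - 2)) ∧
      Integrable ((Ioi 1).indicator fun t => 3 * b ^ α * t ^ (-2 : ℝ)) := by
  simp only [integrable_indicator_iff measurableSet_Ioc, integrable_indicator_iff measurableSet_Ioi]
  refine ⟨(intervalIntegral.intervalIntegrable_rpow' (by linarith)).1, ?_,
    (integrableOn_Ioi_rpow_of_lt (by norm_num) one_pos).const_mul _⟩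
  rcases hb.eq_or_lt with rfl | hb
  · simp
  have h0 : (0 : ℝ) ∉ uIcc b 1 := fun h => (lt_min hb one_pos).not_ge h.1
  exact ((intervalIntegral.intervalIntegrable_rpow (Or.inr h0)).1).const_mul b

theorem integrable_majorant (hα0 : 0 < α) (hb : 0 ≤ b) : Integrable (majorant α b) := by
  obtain ⟨h₁, h₂, h₃⟩ := integrable_majorant_terms hα0 hb
  exact (h₁.add h₂).add h₃

theorem setIntegral_Ioc_mul_rpow_le (hα1 : α < 1) (hb0 : 0 ≤ b) (hb1 : b ≤ 1) :
    ∫ t in Ioc b 1, b * t ^ (α - 2) ≤ b ^ α / (1 - α) := by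
  rcases hb0.eq_or_lt with rfl | hb0
  · have : 0 < 1 - α := sub_pos.2 hα1
    simp; positivity
  have h0 : (0 : ℝ) ∉ uIcc b 1 := by rw [uIcc_of_le hb1]; exact fun h => h.1.not_gt hb0
  rw [← intervalIntegral.integral_of_le hb1, intervalIntegral.integral_const_mul,
    integral_rpow (Or.inr ⟨by linarith, h0⟩), Real.one_rpow,
    show α - 2 + 1 = α - 1 by ring, Real.rpow_sub_one hb0.ne']
  have h1α : 0 < 1 - α := sub_pos.2 hα1
  have hα1' : α - 1 ≠ 0 := by linarith
  calc b * ((1 - b ^ α / b) / (α - 1)) = (b ^ α - b) / (1 - α) := by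
        field_simp; ring
    _ ≤ b ^ α / (1 - α) := by gcongr; linarith

theorem integral_majorant_le (hα0 : 0 < α) (hα1 : α < 1) (hb0 : 0 ≤ b) (hb1 : b ≤ 1) :
    ∫ t, majorant α b t ≤ b ^ α * (1 / α + 1 / (1 - α) + 3) := by
  obtain ⟨h₁, h₂, h₃⟩ := integrable_majorant_terms hα0 hb0
  have e₁ : ∫ t in Ioc 0 b, t ^ (α - 1) = b ^ α / α := by
    rw [← intervalIntegral.integral_of_le hb0, integral_rpow (Or.inl (by linarith)),
      sub_add_cancel, Real.zero_rpow hα0.ne', sub_zero]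
  have e₃ : ∫ t in Ioi 1, 3 * b ^ α * t ^ (-2 : ℝ) = 3 * b ^ α := by
    rw [integral_const_mul, integral_Ioi_rpow_of_lt (by norm_num) one_pos]
    norm_num
  have e₂ := setIntegral_Ioc_mul_rpow_le hα1 hb0 hb1
  change ∫ t, (((Ioc 0 b).indicator fun t => t ^ (α - 1))
    + ((Ioc b 1).indicator fun t => b * t ^ (α - 2))
    + ((Ioi 1).indicator fun t => 3 * b ^ α * t ^ (-2 : ℝ))) t ≤ _
  rw [integral_add' (h₁.add h₂) h₃, integral_add' h₁ h₂, integral_indicator measurableSet_Ioc,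
    integral_indicator measurableSet_Ioc, integral_indicator measurableSet_Ioi, e₁, e₃]
  have : b ^ α * (1 / α + 1 / (1 - α) + 3) = b ^ α / α + b ^ α / (1 - α) + 3 * b ^ α := by ring
  linarith

theorem one_lt_singularConst (hα0 : 0 < α) (hα1 : α < 1) : 1 < singularConst α := by
  have h1 : 0 < 1 / (1 - α) := one_div_pos.2 (sub_pos.2 hα1)
  have h2 : 0 ≤ ∫ t, (weight α t)⁻¹ := integral_nonneg fun t => (inv_pos.2 (weight_pos α t)).le
  have h3 : 0 < 1 / α := one_div_pos.2 hα0
  unfold singularConst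
  linarith

theorem integrable_majorant_add (hα0 : 0 < α) (hα1 : α ≤ 1) (hb : 0 ≤ b) (s : ℝ) :
    Integrable fun ξ => majorant α b |ξ| + 2 * b ^ α * (weight α (s - ξ))⁻¹ :=
  (integrable_comp_abs (integrable_majorant hα0 hb).integrableOn).add
    (((integrable_inv_weight hα0 hα1).comp_sub_left s).const_mul _)

theorem integral_majorant_add_le (hα0 : 0 < α) (hα1 : α < 1) (hb0 : 0 ≤ b) (hb1 : b ≤ 1)
    (s : ℝ) :
    ∫ ξ, (majorant α b |ξ| + 2 * b ^ α * (weight α (s - ξ))⁻¹) ≤ singularConst α * b ^ α := by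
  have hpos : ∫ t in Ioi 0, majorant α b t = ∫ t, majorant α b t :=
    setIntegral_eq_integral_of_forall_compl_eq_zero fun t ht =>
      majorant_of_nonpos hb0 (not_lt.1 ht)
  rw [integral_add (integrable_comp_abs (integrable_majorant hα0 hb0).integrableOn)
      (((integrable_inv_weight hα0 hα1.le).comp_sub_left s).const_mul _),
    integral_comp_abs, hpos, integral_const_mul,
    integral_sub_left_eq_self (fun t => (weight α t)⁻¹)]
  have := integral_majorant_le hα0 hα1 hb0 hb1
  unfold singularConst
  linarith

end Majorant

section SingularIntegral

variable {α b M : ℝ} {F Φ : ℝ → ℝ}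

theorem weight_mul_abs_sub_le (hα0 : 0 ≤ α) (hα1 : α ≤ 1)
    (hsup : ∀ t, weight α t * |F t| ≤ M) (s ξ : ℝ) :
    weight α s * |F (s - ξ) - F s| ≤ M * (3 + 2 * |ξ| ^ (1 + α) * (weight α (s - ξ))⁻¹) := by
  have hw := weight_pos α (s - ξ)
  have hshift : weight α s * |F (s - ξ)| ≤ 2 * M + 2 * |ξ| ^ (1 + α) * (weight α (s - ξ))⁻¹ * M :=
    calc weight α s * |F (s - ξ)|
        ≤ (2 * weight α (s - ξ) + 2 * |ξ| ^ (1 + α)) * |F (s - ξ)| := by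
          gcongr; exact weight_le_two_mul_weight_sub hα0 hα1 s ξ
      _ = 2 * (weight α (s - ξ) * |F (s - ξ)|)
          + 2 * |ξ| ^ (1 + α) * (weight α (s - ξ))⁻¹ * (weight α (s - ξ) * |F (s - ξ)|) := by
          field_simp
      _ ≤ 2 * M + 2 * |ξ| ^ (1 + α) * (weight α (s - ξ))⁻¹ * M := by
          gcongr <;> exact hsup (s - ξ)
  calc weight α s * |F (s - ξ) - F s| ≤ weight α s * |F (s - ξ)| + weight α s * |F s| := by
        rw [← mul_add]; exact mul_le_mul_of_nonneg_left (abs_sub _ _) (weight_pos α s).le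
    _ ≤ 2 * M + 2 * |ξ| ^ (1 + α) * (weight α (s - ξ))⁻¹ * M + M := add_le_add hshift (hsup s)
    _ = _ := by ring

theorem weight_mul_abs_diffQuot_mul_le (hα0 : 0 < α) (hα1 : α < 1) (hb0 : 0 ≤ b) (hb1 : b ≤ 1)
    (hsup : ∀ t, weight α t * |F t| ≤ M)
    (hhol : ∀ s ξ, 0 < |ξ| → |ξ| ≤ 1 → weight α s * |F (s - ξ) - F s| ≤ M * |ξ| ^ α)
    {s ξ x : ℝ} (hξ : ξ ≠ 0) (hx1 : |x| ≤ 1) (hxb : |x| ≤ b / |ξ|) :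
    weight α s * |(F (s - ξ) - F s) / ξ * x| ≤
      M * (majorant α b |ξ| + 2 * b ^ α * (weight α (s - ξ))⁻¹) := by
  have ht : 0 < |ξ| := abs_pos.2 hξ
  have hM : 0 ≤ M := (mul_nonneg (weight_pos α s).le (abs_nonneg _)).trans (hsup s)
  have hw := weight_pos α (s - ξ)
  have htail : 0 ≤ M * (2 * b ^ α * (weight α (s - ξ))⁻¹) := by positivity
  rw [abs_mul, abs_div, mul_add, show weight α s * (|F (s - ξ) - F s| / |ξ| * |x|)
    = weight α s * |F (s - ξ) - F s| * |x| / |ξ| by ring]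
  rcases le_or_gt |ξ| b with hnear | hb
  · have hF := hhol s ξ ht (hnear.trans hb1)
    calc _ ≤ M * |ξ| ^ α * 1 / |ξ| := by gcongr ?_ * ?_ / _
      _ = M * majorant α b |ξ| := by
          rw [majorant_of_le ht hnear hb1, Real.rpow_sub_one ht.ne']; ring
      _ ≤ _ := le_add_of_nonneg_right htail
  rcases le_or_gt |ξ| 1 with hmid | hfar
  · have hF := hhol s ξ ht hmid
    calc _ ≤ M * |ξ| ^ α * (b / |ξ|) / |ξ| := by gcongr ?_ * ?_ / _
      _ = M * majorant α b |ξ| := by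
          rw [majorant_of_lt_of_le hb hmid, Real.rpow_sub ht, Real.rpow_two]; field_simp
      _ ≤ _ := le_add_of_nonneg_right htail
  have hdecay : b * (|ξ| ^ (1 + α) / |ξ| ^ 2) ≤ b ^ α := by
    have h : |ξ| ^ (1 + α) ≤ |ξ| ^ 2 := by
      rw [← Real.rpow_two]; exact Real.rpow_le_rpow_of_exponent_le hfar.le (by linarith)
    calc b * (|ξ| ^ (1 + α) / |ξ| ^ 2) ≤ b * 1 := by
          gcongr; exact div_le_one_of_le₀ h (by positivity)
      _ ≤ b ^ α := by rw [mul_one]; exact Real.self_le_rpow_of_le_one hb0 hb1 hα1.le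
  have hF := weight_mul_abs_sub_le hα0.le hα1.le hsup s ξ
  calc _ ≤ M * (3 + 2 * |ξ| ^ (1 + α) * (weight α (s - ξ))⁻¹) * (b / |ξ|) / |ξ| := by
        gcongr ?_ * ?_ / _
    _ = M * (3 * b * (|ξ| ^ 2)⁻¹)
        + M * (2 * (b * (|ξ| ^ (1 + α) / |ξ| ^ 2)) * (weight α (s - ξ))⁻¹) := by
        field_simp
    _ ≤ M * (3 * b ^ α * (|ξ| ^ 2)⁻¹) + M * (2 * b ^ α * (weight α (s - ξ))⁻¹) := by
        gcongr
        exact Real.self_le_rpow_of_le_one hb0 hb1 hα1.le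
    _ = _ := by rw [majorant_of_one_lt hb1 hfar, Real.rpow_neg ht.le, Real.rpow_two]

theorem ae_norm_diffQuot_mul_le (hα0 : 0 < α) (hα1 : α < 1) (hb0 : 0 ≤ b) (hb1 : b ≤ 1)
    (hsup : ∀ t, weight α t * |F t| ≤ M)
    (hhol : ∀ s ξ, 0 < |ξ| → |ξ| ≤ 1 → weight α s * |F (s - ξ) - F s| ≤ M * |ξ| ^ α)
    (hΦ1 : ∀ ξ, |Φ ξ| ≤ 1) (hΦb : ∀ ξ, ξ ≠ 0 → |Φ ξ| ≤ b / |ξ|) (s : ℝ) :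
    ∀ᵐ ξ, ‖(F (s - ξ) - F s) / ξ * Φ ξ‖ ≤
      (weight α s)⁻¹ * (M * (majorant α b |ξ| + 2 * b ^ α * (weight α (s - ξ))⁻¹)) := by
  filter_upwards [Measure.ae_ne volume 0] with ξ hξ
  rw [Real.norm_eq_abs, le_inv_mul_iff₀ (weight_pos α s)]
  exact weight_mul_abs_diffQuot_mul_le hα0 hα1 hb0 hb1 hsup hhol hξ (hΦ1 ξ) (hΦb ξ hξ)

theorem integrable_diffQuot_mul (hα0 : 0 < α) (hα1 : α < 1) (hb0 : 0 ≤ b) (hb1 : b ≤ 1)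
    (hF : Continuous F)
    (hsup : ∀ t, weight α t * |F t| ≤ M)
    (hhol : ∀ s ξ, 0 < |ξ| → |ξ| ≤ 1 → weight α s * |F (s - ξ) - F s| ≤ M * |ξ| ^ α)
    (hΦm : AEStronglyMeasurable Φ) (hΦ1 : ∀ ξ, |Φ ξ| ≤ 1) (hΦb : ∀ ξ, ξ ≠ 0 → |Φ ξ| ≤ b / |ξ|)
    (s : ℝ) : Integrable fun ξ => (F (s - ξ) - F s) / ξ * Φ ξ :=
  (((integrable_majorant_add hα0 hα1.le hb0 s).const_mul M).const_mul _).mono'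
    ((Measurable.aestronglyMeasurable (by fun_prop)).mul hΦm)
    (ae_norm_diffQuot_mul_le hα0 hα1 hb0 hb1 hsup hhol hΦ1 hΦb s)

theorem weight_mul_abs_integral_diffQuot_mul_le (hα0 : 0 < α) (hα1 : α < 1) (hb0 : 0 ≤ b)
    (hb1 : b ≤ 1)
    (hsup : ∀ t, weight α t * |F t| ≤ M)
    (hhol : ∀ s ξ, 0 < |ξ| → |ξ| ≤ 1 → weight α s * |F (s - ξ) - F s| ≤ M * |ξ| ^ α)
    (hΦ1 : ∀ ξ, |Φ ξ| ≤ 1) (hΦb : ∀ ξ, ξ ≠ 0 → |Φ ξ| ≤ b / |ξ|) (s : ℝ) :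
    weight α s * |∫ ξ, (F (s - ξ) - F s) / ξ * Φ ξ| ≤ singularConst α * b ^ α * M := by
  have hM : 0 ≤ M := (mul_nonneg (weight_pos α s).le (abs_nonneg _)).trans (hsup s)
  have hw := weight_pos α s
  have h := norm_integral_le_of_norm_le
    (((integrable_majorant_add hα0 hα1.le hb0 s).const_mul M).const_mul _)
    (ae_norm_diffQuot_mul_le hα0 hα1 hb0 hb1 hsup hhol hΦ1 hΦb s)
  rw [integral_const_mul, integral_const_mul, Real.norm_eq_abs] at h
  calc weight α s * |∫ ξ, (F (s - ξ) - F s) / ξ * Φ ξ|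
      ≤ weight α s * ((weight α s)⁻¹ *
          (M * ∫ ξ, (majorant α b |ξ| + 2 * b ^ α * (weight α (s - ξ))⁻¹))) := by gcongr
    _ = M * ∫ ξ, (majorant α b |ξ| + 2 * b ^ α * (weight α (s - ξ))⁻¹) := by field_simp
    _ ≤ M * (singularConst α * b ^ α) := by gcongr; exact integral_majorant_add_le hα0 hα1 hb0 hb1 s
    _ = _ := by ring

end SingularIntegral

def TOp (Φ : ℝ → ℝ → ℝ) (g : ℝ → ℝ) (s : ℝ) : ℝ :=
  (1 / (2 * Real.pi)) * ∫ ξ, ((deriv g (s - ξ) - deriv g s) / ξ) * Φ ξ s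

theorem tendsto_TInt_TOp {Φ : ℝ → ℝ → ℝ} {g : ℝ → ℝ} {s : ℝ}
    (h : Integrable fun ξ => ((deriv g (s - ξ) - deriv g s) / ξ) * Φ ξ s) :
    Tendsto (TInt Φ g s) atTop (𝓝 (TOp Φ g s)) :=
  (intervalIntegral_tendsto_integral h tendsto_neg_atTop_atBot tendsto_id).const_mul _

theorem integrable_and_weight_mul_abs_TOp_le {α b : ℝ} {Φ : ℝ → ℝ → ℝ} {f : ℝ → ℝ}
    (hα0 : 0 < α) (hα1 : α < 1) (hb0 : 0 ≤ b) (hb1 : b ≤ 1) (hf : CStar α 1 f)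
    (hΦm : ∀ s, AEStronglyMeasurable (Φ · s)) (hΦ1 : ∀ ξ s, |Φ ξ s| ≤ 1)
    (hΦb : ∀ ξ s, ξ ≠ 0 → |Φ ξ s| ≤ b / |ξ|) (s : ℝ) :
    (Integrable fun ξ => ((deriv f (s - ξ) - deriv f s) / ξ) * Φ ξ s) ∧
      weight α s * |TOp Φ f s| ≤ singularConst α * b ^ α * (wNorm α 1 f).toReal := by
  have hN := hf.2.ne
  have hsup := weight_mul_abs_deriv_le_wNorm hN
  have hhol := fun s ξ => weight_mul_abs_deriv_sub_le_wNorm (ξ := ξ) hN s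
  refine ⟨integrable_diffQuot_mul hα0 hα1 hb0 hb1 (hf.1.continuous_deriv le_rfl) hsup hhol
    (hΦm s) (hΦ1 · s) (hΦb · s) s, ?_⟩
  have hπ : |1 / (2 * Real.pi)| ≤ 1 := by
    rw [abs_of_pos (by positivity), div_le_one (by positivity)]
    linarith [Real.pi_gt_three]
  calc weight α s * |TOp Φ f s|
      ≤ weight α s * |∫ ξ, ((deriv f (s - ξ) - deriv f s) / ξ) * Φ ξ s| := by
        rw [TOp, abs_mul]
        have := weight_pos α s
        gcongr
        exact mul_le_of_le_one_left (abs_nonneg _) hπ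
    _ ≤ _ := weight_mul_abs_integral_diffQuot_mul_le hα0 hα1 hb0 hb1 hsup hhol
        (hΦ1 · s) (hΦb · s) s

theorem wSup_le_ofReal_mul {α A : ℝ} {N : ℝ≥0∞} {g : ℝ → ℝ} (hA : 0 ≤ A) (hN : N ≠ ⊤)
    (h : ∀ s, weight α s * |g s| ≤ A * N.toReal) : wSup α g ≤ ENNReal.ofReal A * N :=
  iSup_le fun s => (ENNReal.ofReal_le_ofReal (h s)).trans_eq
    (by rw [ENNReal.ofReal_mul hA, ENNReal.ofReal_toReal hN])

theorem Kf_pos (x : ℝ) : 0 < Kf x := by unfold Kf; positivity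

theorem Kf_le_one (x : ℝ) : Kf x ≤ 1 := by
  unfold Kf
  rw [div_le_one (by positivity)]
  exact le_add_of_nonneg_right (sq_nonneg x)

theorem abs_Kf_sub_Kf_le_one (x y : ℝ) : |Kf x - Kf y| ≤ 1 :=
  abs_sub_le_iff.2 ⟨by linarith [Kf_pos y, Kf_le_one x], by linarith [Kf_pos x, Kf_le_one y]⟩

theorem abs_Kf_sub_Kf_le (x y : ℝ) : |Kf x - Kf y| ≤ |x - y| := by
  have hx : 0 < 1 + x ^ 2 := by positivity
  have hy : 0 < 1 + y ^ 2 := by positivity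
  have hsum : |x + y| ≤ (1 + x ^ 2) * (1 + y ^ 2) := by
    rw [abs_le]
    constructor <;> nlinarith [sq_nonneg (x - 1), sq_nonneg (y - 1), sq_nonneg (x + 1),
      sq_nonneg (y + 1), sq_nonneg (x * y)]
  have hdiff : Kf x - Kf y = (y - x) * (x + y) / ((1 + x ^ 2) * (1 + y ^ 2)) := by
    unfold Kf; field_simp; ring
  rw [hdiff, abs_div, abs_mul, abs_sub_comm, abs_of_pos (mul_pos hx hy),
    div_le_iff₀ (mul_pos hx hy)]
  gcongr

theorem abs_Kf_add_div_sub_Kf_le (x a ξ : ℝ) : |Kf (x + a / ξ) - Kf x| ≤ |a| / |ξ| := by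
  simpa [abs_div] using abs_Kf_sub_Kf_le (x + a / ξ) x

theorem measurable_Kf : Measurable Kf := by unfold Kf; fun_prop

theorem measurable_Zf {z : ℝ → ℝ} (hz : Measurable z) (s : ℝ) :
    Measurable fun ξ => Zf z ξ s := by
  unfold Zf; fun_prop

/-- Lemma 3.4: continuity of `c ↦ K(Z + c/ξ)` at `c = 0`:
`‖T_Φ f‖₀* ≤ C ‖f‖_{1,α}* ‖c‖_∞^α` for `Φ = K(Z + c/ξ) - K(Z)`. -/
theorem TPhi_small_c_estimate :
    ∀ α : ℝ, 0 < α → α < 1 →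
    ∃ C : ℝ, 1 < C ∧
      ∀ (β : ℝ) (ztil c : ℝ → ℝ), Continuous ztil → Continuous c →
        (∀ s, |c s| ≤ 1) →
        ∀ f : ℝ → ℝ, CStar α 1 f →
          ∃ Tf : ℝ → ℝ,
            (∀ s, Tendsto
              (fun R => TInt (fun ξ s' => Kf (Zf (lineFun β ztil) ξ s' + c s' / ξ)
                  - Kf (Zf (lineFun β ztil) ξ s')) f s R) atTop (𝓝 (Tf s))) ∧
            ∀ B : ℝ, 0 ≤ B → (∀ s, |c s| ≤ B) →
              wSup α Tf ≤ ENNReal.ofReal (C * B ^ α) * wNorm α 1 f := by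
  intro α hα0 hα1
  have hC := one_lt_singularConst hα0 hα1
  refine ⟨singularConst α, hC, fun β ztil c hz _ hc1 f hf => ?_⟩
  set Φ : ℝ → ℝ → ℝ := fun ξ s => Kf (Zf (lineFun β ztil) ξ s + c s / ξ)
    - Kf (Zf (lineFun β ztil) ξ s)
  have hZ := measurable_Zf (by unfold lineFun; fun_prop : Measurable (lineFun β ztil))
  have hΦm : ∀ s, AEStronglyMeasurable (Φ · s) := fun s =>
    ((measurable_Kf.comp ((hZ s).add (measurable_const.div measurable_id))).sub
      (measurable_Kf.comp (hZ s))).aestronglyMeasurable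
  have hT := fun b hb0 hb1 (hcb : ∀ s, |c s| ≤ b) =>
    integrable_and_weight_mul_abs_TOp_le hα0 hα1 hb0 hb1 hf hΦm
      (fun ξ s => abs_Kf_sub_Kf_le_one _ _)
      (fun ξ s _ => (abs_Kf_add_div_sub_Kf_le _ _ _).trans (by gcongr; exact hcb s))
  refine ⟨TOp Φ f, fun s => tendsto_TInt_TOp (hT 1 zero_le_one le_rfl hc1 s).1,
    fun B hB hcB => wSup_le_ofReal_mul (by positivity) hf.2.ne fun s => ?_⟩
  calc weight α s * |TOp Φ f s|
      ≤ singularConst α * min B 1 ^ α * (wNorm α 1 f).toReal :=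
        (hT (min B 1) (le_min hB zero_le_one) (min_le_right _ _)
          (fun s => le_min (hcB s) (hc1 s)) s).2
    _ ≤ singularConst α * B ^ α * (wNorm α 1 f).toReal := by
        gcongr
        exact min_le_left _ _
end
end

section
/- For every 0<α<1 there exists a constant C=C(α)>1 such that the following holds. Let β∈ℝ, T>0, and z(s,t)=βs+z̃(s,t) with z̃∈C([0,T];C^{1,α}(ℝ)). Define I(s,t) := PV∫_ℝ ξ/(ξ²+(z(s,t)−z(s−ξ,t))²) dξ, where PV∫_ℝ := lim_{ε→0⁺, R→∞} ∫_{ε≤|ξ|≤R}. Then the principal value exists for every (s,t), the function I is continuous on ℝ×[0,T], and |I(s,t)| ≤ C(‖z̃(·,t)‖_∞ + ‖∂_sz(·,t)‖_{C^α}) for all s,t. -/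
open MeasureTheory Filter Topology Set
open scoped ENNReal

noncomputable section

/-- `Φ̄ = ξ(Φ - Φ^∞)`. -/
def barW (Φ : ℝ → ℝ → ℝ) (Φinf : ℝ → ℝ) (ξ s : ℝ) : ℝ := ξ * (Φ ξ s - Φinf s)

/-- `Φ̃ = ξ∂_ξΦ - Φ`. -/
def tildeW (Φ : ℝ → ℝ → ℝ) (ξ s : ℝ) : ℝ := ξ * deriv (fun ξ' => Φ ξ' s) ξ - Φ ξ s

/-- The weight norm `⦀Φ⦀₀` (relative to the far field `Φinf = Φ^∞`). -/
def WNorm0 (Φ : ℝ → ℝ → ℝ) (Φinf : ℝ → ℝ) : ℝ≥0∞ :=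
  (⨆ s : ℝ, ⨆ ξ : {ξ : ℝ // 0 < |ξ| ∧ |ξ| ≤ 1}, ENNReal.ofReal |Φ ξ.1 s|)
    + ⨆ s : ℝ, ⨆ ξ : {ξ : ℝ // 1 < |ξ|},
        ENNReal.ofReal (|barW Φ Φinf ξ.1 s| + |tildeW Φ ξ.1 s|)

/-- Membership `Φ ∈ W⁰`, with far field `Φinf`. -/
def MemW0 (Φ : ℝ → ℝ → ℝ) (Φinf : ℝ → ℝ) : Prop :=
  (∀ s, ContDiffOn ℝ 1 (fun ξ => Φ ξ s) {(0 : ℝ)}ᶜ) ∧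
  (∀ s, Tendsto (fun ξ => Φ ξ s) (cocompact ℝ) (𝓝 (Φinf s))) ∧
  WNorm0 Φ Φinf < ⊤

/-- Ordinary Hölder seminorm in one variable (with value in `ℝ≥0∞`). -/
def holderS (α : ℝ) (g : ℝ → ℝ) : ℝ≥0∞ :=
  ⨆ p : ℝ × ℝ, ENNReal.ofReal (|g p.1 - g p.2| / |p.1 - p.2| ^ α)

/-- Hölder seminorm jointly in the two variables `(ξ,s)`. -/
def holderJoint (α : ℝ) (G : ℝ → ℝ → ℝ) : ℝ≥0∞ :=
  ⨆ p : (ℝ × ℝ) × ℝ × ℝ,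
    ENNReal.ofReal (|G p.1.1 p.1.2 - G p.2.1 p.2.2| / dist p.1 p.2 ^ α)

/-- The weight norm `⦀Φ⦀_{k,α}`. -/
def WNormK (α : ℝ) (k : ℕ) (Φ : ℝ → ℝ → ℝ) (Φinf : ℝ → ℝ) : ℝ≥0∞ :=
  (⨆ j : Fin (k + 1),
      WNorm0 (fun ξ s => iteratedDeriv j.1 (Φ ξ) s) (iteratedDeriv j.1 Φinf))
    + holderJoint α (fun ξ s => iteratedDeriv k (Φ ξ) s)
    + ⨆ ξ : {ξ : ℝ // 1 < |ξ|},
        (holderS α (fun s => iteratedDeriv k (fun s' => barW Φ Φinf ξ.1 s') s)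
          + holderS α (fun s => iteratedDeriv k (fun s' => tildeW Φ ξ.1 s') s))

/-- Membership `Φ ∈ W^{k,α}`, with far field `Φinf`. -/
def MemWK (α : ℝ) (k : ℕ) (Φ : ℝ → ℝ → ℝ) (Φinf : ℝ → ℝ) : Prop :=
  MemW0 Φ Φinf ∧ (∀ ξ : ℝ, ξ ≠ 0 → ContDiff ℝ k (Φ ξ)) ∧ WNormK α k Φ Φinf < ⊤

/-- Ordinary (unweighted) Hölder norm `‖f‖_{C^{k,α}}` with values in `ℝ≥0∞`. -/
def hNorm (α : ℝ) (k : ℕ) (f : ℝ → ℝ) : ℝ≥0∞ :=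
  (⨆ s : ℝ, ⨆ j : Fin (k + 1), ENNReal.ofReal |iteratedDeriv j.1 f s|)
    + holderS α (iteratedDeriv k f)

/-!
Pairing `ξ` with `-ξ` turns the integrand into `ξ (b² - a²) / ((ξ² + a²)(ξ² + b²))` with
`a = z(s) - z(s-ξ)`, `b = z(s+ξ) - z(s)`, which is bounded by the second difference
`|z(s+ξ) + z(s-ξ) - 2z(s)| / ξ²`. Near `ξ = 0` the mean value theorem and the `C^α` bound `H` on
`∂_s z` bound the second difference by `2^α H ξ^{1+α}`; for large `ξ` the linear part `βs`
cancels and it is at most `4 ‖z̃‖_∞`. The resulting majorant is integrable on `(0, ∞)` with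
integral `2^α H / α + 4 ‖z̃‖_∞`, so the principal value is the absolutely convergent integral of
the symmetrised kernel over `(0, ∞)`. Continuity in `(s, t)` is dominated convergence, `z̃` being
jointly continuous because `t ↦ z̃(·, t)` is continuous for the sup norm.
-/

lemma setOf_le_abs_le_eq_union_Icc {ε R : ℝ} (hε : 0 < ε) :
    {ξ : ℝ | ε ≤ |ξ| ∧ |ξ| ≤ R} = Icc (-R) (-ε) ∪ Icc ε R := by
  ext ξ
  simp only [mem_ofPred_eq, mem_union, mem_Icc, le_abs', abs_le]
  constructor
  · rintro ⟨h | h, h₁, h₂⟩ <;> [left; right] <;> constructor <;> linarith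
  · rintro (⟨h₁, h₂⟩ | ⟨h₁, h₂⟩) <;> refine ⟨by tauto, by linarith, by linarith⟩

section SymmetricIntegral

variable {E : Type*} [NormedAddCommGroup E] [NormedSpace ℝ E]

lemma setIntegral_le_abs_le_eq_Ioc_add_neg {f : ℝ → E} (hf : ContinuousOn f {0}ᶜ) {ε R : ℝ}
    (hε : 0 < ε) (hεR : ε ≤ R) :
    ∫ ξ in {ξ : ℝ | ε ≤ |ξ| ∧ |ξ| ≤ R}, f ξ = ∫ ξ in Ioc ε R, (f ξ + f (-ξ)) := by
  have hf' : ContinuousOn (fun ξ => f (-ξ)) {0}ᶜ :=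
    hf.comp continuous_neg.continuousOn fun _ hξ => neg_ne_zero.mpr hξ
  have hIcc : Icc ε R ⊆ {0}ᶜ := fun _ hξ => (hε.trans_le hξ.1).ne'
  have hneg : IntegrableOn f (Icc (-R) (-ε)) :=
    (hf.mono fun _ hξ => (hξ.2.trans_lt (neg_neg_of_pos hε)).ne).integrableOn_Icc
  have hdisj : Disjoint (Icc (-R) (-ε)) (Icc ε R) :=
    Set.disjoint_left.mpr fun _ h₁ h₂ => by linarith [h₁.2, h₂.1]
  rw [setOf_le_abs_le_eq_union_Icc hε, setIntegral_union hdisj measurableSet_Icc hneg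
      (hf.mono hIcc).integrableOn_Icc,
    integral_Icc_eq_integral_Ioc, integral_Icc_eq_integral_Ioc,
    ← intervalIntegral.integral_of_le (neg_le_neg hεR), ← intervalIntegral.integral_of_le hεR,
    ← intervalIntegral.integral_of_le hεR, ← intervalIntegral.integral_comp_neg, add_comm,
    intervalIntegral.integral_add ((hf.mono hIcc).intervalIntegrable_of_Icc hεR)
      ((hf'.mono hIcc).intervalIntegrable_of_Icc hεR)]

lemma tendsto_setIntegral_Ioc_of_integrableOn_Ioi {f : ℝ → E} {a : ℝ}
    (hf : IntegrableOn f (Ioi a)) :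
    Tendsto (fun q : ℝ × ℝ => ∫ ξ in Ioc q.1 q.2, f ξ) (𝓝[>] a ×ˢ atTop)
      (𝓝 (∫ ξ in Ioi a, f ξ)) := by
  have hcover : AECover (volume.restrict (Ioi a)) (𝓝[>] a ×ˢ atTop)
      fun q : ℝ × ℝ => Ioi q.1 ∩ Iic q.2 :=
    (aecover_Ioi_of_Ioi (tendsto_fst.mono_right nhdsWithin_le_nhds)).inter
      (aecover_Iic tendsto_snd)
  refine (hcover.integral_tendsto_of_countably_generated hf).congr' ?_
  filter_upwards [tendsto_fst.eventually self_mem_nhdsWithin] with q hq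
  rw [Measure.restrict_restrict (measurableSet_Ioi.inter measurableSet_Iic), Ioi_inter_Iic,
    inter_eq_left.mpr (Ioc_subset_Ioi_self.trans (Ioi_subset_Ioi (le_of_lt hq)))]

end SymmetricIntegral

lemma TendstoUniformly.comp_tendsto {ι ι' α β : Type*} [UniformSpace β] {F : ι → α → β}
    {f : α → β} {p : Filter ι} {p' : Filter ι'} {g : ι' → ι} (h : TendstoUniformly F f p)
    (hg : Tendsto g p' p) : TendstoUniformly (fun i => F (g i)) f p' :=
  tendstoUniformly_iff_tendsto.mpr <|
    (tendstoUniformly_iff_tendsto.mp h).comp ((hg.comp tendsto_fst).prodMk tendsto_snd)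

lemma continuousOn_uncurry_of_tendstoUniformly {X Y E : Type*} [TopologicalSpace X]
    [TopologicalSpace Y] [UniformSpace E] {f : X → Y → E} {S : Set Y}
    (hf : ∀ t ∈ S, Continuous fun x => f x t)
    (hu : ∀ t ∈ S, TendstoUniformly (fun t' x => f x t') (fun x => f x t) (𝓝[S] t)) :
    ContinuousOn (fun q : X × Y => f q.1 q.2) (Prod.snd ⁻¹' S) := by
  rintro ⟨x₀, t₀⟩ ht₀
  have hsnd : Tendsto Prod.snd (𝓝[Prod.snd ⁻¹' S] (x₀, t₀)) (𝓝[S] t₀) :=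
    continuous_snd.continuousWithinAt.tendsto_nhdsWithin fun _ hq => hq
  exact ((hu t₀ ht₀).comp_tendsto hsnd).tendsto_comp (hf t₀ ht₀).continuousAt
    ((continuous_fst.tendsto _).mono_left nhdsWithin_le_nhds)

lemma nonneg_of_abs_sub_le_mul_rpow {α H : ℝ} {g : ℝ → ℝ}
    (hg : ∀ x y, |g x - g y| ≤ H * |x - y| ^ α) : 0 ≤ H := by
  simpa using (abs_nonneg _).trans (hg 1 0)

/-- Two mean value points, at distance at most `2ξ`. -/
lemma abs_secondDiff_le_of_holder_deriv {α H : ℝ} (hα : 0 ≤ α) {z : ℝ → ℝ}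
    (hz : Differentiable ℝ z) (hH : ∀ x y, |deriv z x - deriv z y| ≤ H * |x - y| ^ α)
    (s : ℝ) {ξ : ℝ} (hξ : 0 < ξ) :
    |z (s + ξ) + z (s - ξ) - 2 * z s| ≤ H * (2 * ξ) ^ α * ξ := by
  obtain ⟨c, ⟨hc₁, hc₂⟩, hc⟩ := exists_deriv_eq_slope z (by linarith : s < s + ξ)
    hz.continuous.continuousOn (fun x _ => (hz x).differentiableWithinAt)
  obtain ⟨d, ⟨hd₁, hd₂⟩, hd⟩ := exists_deriv_eq_slope z (by linarith : s - ξ < s)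
    hz.continuous.continuousOn (fun x _ => (hz x).differentiableWithinAt)
  have hsplit : z (s + ξ) + z (s - ξ) - 2 * z s = (deriv z c - deriv z d) * ξ := by
    rw [hc, hd, add_sub_cancel_left, sub_sub_cancel]
    field_simp
    ring
  have hcd : |c - d| ≤ 2 * ξ := by rw [abs_le]; constructor <;> linarith
  rw [hsplit, abs_mul, abs_of_pos hξ]
  gcongr
  calc |deriv z c - deriv z d| ≤ H * |c - d| ^ α := hH c d
    _ ≤ H * (2 * ξ) ^ α := by
        gcongr
        exact nonneg_of_abs_sub_le_mul_rpow hH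

section HolderNorm

variable {α : ℝ} {k : ℕ} {f : ℝ → ℝ} {M : ℝ≥0∞}

lemma abs_le_toReal_of_hNorm_le (hM : M ≠ ⊤) (h : hNorm α k f ≤ M) (s : ℝ) :
    |f s| ≤ M.toReal := by
  refine (ENNReal.ofReal_le_iff_le_toReal hM).mp (le_trans ?_ h)
  calc ENNReal.ofReal |f s| = ENNReal.ofReal |iteratedDeriv (0 : Fin (k + 1)).1 f s| := by simp
    _ ≤ hNorm α k f := by
      unfold hNorm
      exact le_add_right (le_iSup₂_of_le (f := fun (s : ℝ) (j : Fin (k + 1)) =>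
        ENNReal.ofReal |iteratedDeriv j.1 f s|) s 0 le_rfl)

lemma abs_deriv_sub_le_of_hNorm_le (hM : M ≠ ⊤) (h : hNorm α 1 f ≤ M) (x y : ℝ) :
    |deriv f x - deriv f y| ≤ M.toReal * |x - y| ^ α := by
  rcases eq_or_ne x y with rfl | hxy
  · simp only [sub_self, abs_zero]; positivity
  have hpos : 0 < |x - y| ^ α := Real.rpow_pos_of_pos (abs_pos.mpr (sub_ne_zero.mpr hxy)) α
  rw [← div_le_iff₀ hpos]
  refine (ENNReal.ofReal_le_iff_le_toReal hM).mp (le_trans ?_ h)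
  calc ENNReal.ofReal (|deriv f x - deriv f y| / |x - y| ^ α)
      = ENNReal.ofReal (|iteratedDeriv 1 f (x, y).1 - iteratedDeriv 1 f (x, y).2|
          / |(x, y).1 - (x, y).2| ^ α) := by simp [iteratedDeriv_one]
    _ ≤ hNorm α 1 f := by
      unfold hNorm holderS
      exact le_add_left (le_iSup (fun p : ℝ × ℝ => ENNReal.ofReal
        (|iteratedDeriv 1 f p.1 - iteratedDeriv 1 f p.2| / |p.1 - p.2| ^ α)) (x, y))

lemma tendstoUniformly_of_tendsto_hNorm_sub {ι : Type*} {F : ι → ℝ → ℝ} {p : Filter ι}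
    (h : Tendsto (fun i => hNorm α k fun s => F i s - f s) p (𝓝 0)) : TendstoUniformly F f p := by
  refine Metric.tendstoUniformly_iff.mpr fun ε hε => ?_
  filter_upwards [ENNReal.tendsto_nhds_zero.mp h (ENNReal.ofReal (ε / 2)) (by simpa using hε)]
    with i hi s
  have := abs_le_toReal_of_hNorm_le ENNReal.ofReal_ne_top hi s
  rw [ENNReal.toReal_ofReal (by positivity)] at this
  rw [Real.dist_eq, abs_sub_comm]
  linarith

end HolderNorm

lemma abs_secondDiff_le_of_abs_le {f : ℝ → ℝ} {A : ℝ} (hA : ∀ s, |f s| ≤ A) (s ξ : ℝ) :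
    |f (s + ξ) + f (s - ξ) - 2 * f s| ≤ 4 * A := by
  have h₁ := abs_le.mp (hA (s + ξ))
  have h₂ := abs_le.mp (hA (s - ξ))
  have h₃ := abs_le.mp (hA s)
  rw [abs_le]; constructor <;> linarith

section LineFun

variable {β : ℝ} {f : ℝ → ℝ}

lemma differentiable_lineFun (hf : Differentiable ℝ f) : Differentiable ℝ (lineFun β f) :=
  (differentiable_id.const_mul β).add hf

lemma deriv_lineFun (hf : Differentiable ℝ f) (x : ℝ) : deriv (lineFun β f) x = β + deriv f x := by
  have h : HasDerivAt (lineFun β f) (β * 1 + deriv f x) x :=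
    ((hasDerivAt_id' x).const_mul β).add (hf x).hasDerivAt
  rw [h.deriv, mul_one]

lemma lineFun_secondDiff (s ξ : ℝ) :
    lineFun β f (s + ξ) + lineFun β f (s - ξ) - 2 * lineFun β f s
      = f (s + ξ) + f (s - ξ) - 2 * f s := by
  unfold lineFun; ring

lemma abs_secondDiff_lineFun_le {A : ℝ} (hA : ∀ s, |f s| ≤ A) (s ξ : ℝ) :
    |lineFun β f (s + ξ) + lineFun β f (s - ξ) - 2 * lineFun β f s| ≤ 4 * A := by
  rw [lineFun_secondDiff]
  exact abs_secondDiff_le_of_abs_le hA s ξ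

lemma abs_deriv_lineFun_sub_le_of_hNorm_le {α : ℝ} {M : ℝ≥0∞} (hf : Differentiable ℝ f)
    (hM : M ≠ ⊤) (h : hNorm α 1 f ≤ M) (x y : ℝ) :
    |deriv (lineFun β f) x - deriv (lineFun β f) y| ≤ M.toReal * |x - y| ^ α := by
  rw [deriv_lineFun hf, deriv_lineFun hf, add_sub_add_left_eq_sub]
  exact abs_deriv_sub_le_of_hNorm_le hM h x y

end LineFun

namespace PVKernel

def pvKernel (z : ℝ → ℝ) (s ξ : ℝ) : ℝ := ξ / (ξ ^ 2 + (z s - z (s - ξ)) ^ 2)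

def symKernel (z : ℝ → ℝ) (s ξ : ℝ) : ℝ := pvKernel z s ξ + pvKernel z s (-ξ)

lemma continuousOn_pvKernel {z : ℝ → ℝ} (hz : Continuous z) (s : ℝ) :
    ContinuousOn (pvKernel z s) {0}ᶜ := by
  refine continuousOn_id.div (by fun_prop) fun ξ hξ => ?_
  have : ξ ≠ 0 := hξ
  positivity

lemma continuousOn_symKernel {z : ℝ → ℝ} (hz : Continuous z) (s : ℝ) :
    ContinuousOn (symKernel z s) {0}ᶜ :=
  (continuousOn_pvKernel hz s).add <| (continuousOn_pvKernel hz s).comp continuous_neg.continuousOn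
    fun _ hξ => neg_ne_zero.mpr hξ

lemma abs_mul_abs_add_mul_sq_le (x a b : ℝ) :
    |x| * |a + b| * x ^ 2 ≤ (x ^ 2 + a ^ 2) * (x ^ 2 + b ^ 2) := by
  have ha : 2 * |x| * |a| ≤ x ^ 2 + a ^ 2 := by
    nlinarith [sq_nonneg (|x| - |a|), sq_abs x, sq_abs a]
  have hb : 2 * |x| * |b| ≤ x ^ 2 + b ^ 2 := by
    nlinarith [sq_nonneg (|x| - |b|), sq_abs x, sq_abs b]
  have hab : |a + b| ≤ |a| + |b| := abs_add_le a b
  nlinarith [abs_nonneg x, sq_nonneg x, sq_nonneg a, sq_nonneg b,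
    mul_le_mul_of_nonneg_left hab (mul_nonneg (abs_nonneg x) (sq_nonneg x))]

lemma abs_symKernel_le (z : ℝ → ℝ) (s : ℝ) {ξ : ℝ} (hξ : ξ ≠ 0) :
    |symKernel z s ξ| ≤ |z (s + ξ) + z (s - ξ) - 2 * z s| / ξ ^ 2 := by
  set a := z s - z (s - ξ)
  set b := z (s + ξ) - z s
  have hP : 0 < ξ ^ 2 + a ^ 2 := by positivity
  have hQ : 0 < ξ ^ 2 + b ^ 2 := by positivity
  have hsym : symKernel z s ξ = ξ * (b - a) * (b + a) / ((ξ ^ 2 + a ^ 2) * (ξ ^ 2 + b ^ 2)) := by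
    simp only [symKernel, pvKernel, sub_neg_eq_add, a, b]
    field_simp
    ring
  have hdiff : z (s + ξ) + z (s - ξ) - 2 * z s = b - a := by ring
  rw [hsym, hdiff, abs_div, abs_mul, abs_mul, abs_of_pos (mul_pos hP hQ),
    div_le_div_iff₀ (mul_pos hP hQ) (by positivity)]
  calc |ξ| * |b - a| * |b + a| * ξ ^ 2 = |b - a| * (|ξ| * |b + a| * ξ ^ 2) := by ring
    _ ≤ |b - a| * ((ξ ^ 2 + a ^ 2) * (ξ ^ 2 + b ^ 2)) := by
        rw [add_comm b a]
        exact mul_le_mul_of_nonneg_left (abs_mul_abs_add_mul_sq_le ξ a b) (abs_nonneg _)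

def kernelMajorant (α H K ξ : ℝ) : ℝ :=
  if ξ ≤ 1 then 2 ^ α * H * ξ ^ (α - 1) else K * ξ ^ (-2 : ℝ)

section Majorant

variable {α H K : ℝ} {z : ℝ → ℝ}

lemma eqOn_kernelMajorant_Ioc :
    EqOn (kernelMajorant α H K) (fun ξ => 2 ^ α * H * ξ ^ (α - 1)) (Ioc 0 1) :=
  fun _ hξ => if_pos hξ.2

lemma eqOn_kernelMajorant_Ioi :
    EqOn (kernelMajorant α H K) (fun ξ => K * ξ ^ (-2 : ℝ)) (Ioi 1) :=
  fun _ hξ => if_neg (not_le.mpr hξ)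

lemma abs_symKernel_le_kernelMajorant (hα : 0 ≤ α) (hz : Differentiable ℝ z)
    (hH : ∀ x y, |deriv z x - deriv z y| ≤ H * |x - y| ^ α)
    (hK : ∀ s ξ, |z (s + ξ) + z (s - ξ) - 2 * z s| ≤ K) (s : ℝ) {ξ : ℝ} (hξ : 0 < ξ) :
    |symKernel z s ξ| ≤ kernelMajorant α H K ξ := by
  refine (abs_symKernel_le z s hξ.ne').trans ?_
  unfold kernelMajorant
  split_ifs
  · calc |z (s + ξ) + z (s - ξ) - 2 * z s| / ξ ^ 2 ≤ H * (2 * ξ) ^ α * ξ / ξ ^ 2 := by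
          gcongr; exact abs_secondDiff_le_of_holder_deriv hα hz hH s hξ
      _ = 2 ^ α * H * ξ ^ (α - 1) := by
          rw [Real.mul_rpow zero_le_two hξ.le, Real.rpow_sub_one hξ.ne']
          field_simp
  · calc |z (s + ξ) + z (s - ξ) - 2 * z s| / ξ ^ 2 ≤ K / ξ ^ 2 := by gcongr; exact hK s ξ
      _ = K * ξ ^ (-2 : ℝ) := by
          rw [Real.rpow_neg hξ.le, div_eq_mul_inv]; norm_cast

lemma integrableOn_kernelMajorant_Ioc (hα : 0 < α) :
    IntegrableOn (kernelMajorant α H K) (Ioc 0 1) := by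
  refine IntegrableOn.congr_fun ?_ eqOn_kernelMajorant_Ioc.symm measurableSet_Ioc
  exact ((intervalIntegrable_iff_integrableOn_Ioc_of_le zero_le_one).mp
    (intervalIntegral.intervalIntegrable_rpow' (by linarith))).const_mul _

lemma integrableOn_kernelMajorant_Ioi_one : IntegrableOn (kernelMajorant α H K) (Ioi 1) := by
  refine IntegrableOn.congr_fun ?_ eqOn_kernelMajorant_Ioi.symm measurableSet_Ioi
  exact (integrableOn_Ioi_rpow_of_lt (by norm_num) one_pos).const_mul _

lemma integrableOn_kernelMajorant (hα : 0 < α) : IntegrableOn (kernelMajorant α H K) (Ioi 0) := by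
  rw [← Ioc_union_Ioi_eq_Ioi zero_le_one]
  exact (integrableOn_kernelMajorant_Ioc hα).union integrableOn_kernelMajorant_Ioi_one

lemma integral_kernelMajorant (hα : 0 < α) :
    ∫ ξ in Ioi 0, kernelMajorant α H K ξ = 2 ^ α * H / α + K := by
  rw [← Ioc_union_Ioi_eq_Ioi zero_le_one, setIntegral_union Ioc_disjoint_Ioi_same measurableSet_Ioi
    (integrableOn_kernelMajorant_Ioc hα) integrableOn_kernelMajorant_Ioi_one,
    setIntegral_congr_fun measurableSet_Ioc eqOn_kernelMajorant_Ioc,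
    setIntegral_congr_fun measurableSet_Ioi eqOn_kernelMajorant_Ioi,
    integral_const_mul, integral_const_mul, ← intervalIntegral.integral_of_le zero_le_one,
    integral_rpow (Or.inl (by linarith)), integral_Ioi_rpow_of_lt (by norm_num) one_pos]
  simp only [sub_add_cancel, Real.one_rpow, Real.zero_rpow hα.ne', sub_zero, one_div]
  field_simp
  ring

lemma integrableOn_symKernel (hα : 0 < α) (hz : Differentiable ℝ z)
    (hH : ∀ x y, |deriv z x - deriv z y| ≤ H * |x - y| ^ α)
    (hK : ∀ s ξ, |z (s + ξ) + z (s - ξ) - 2 * z s| ≤ K) (s : ℝ) :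
    IntegrableOn (symKernel z s) (Ioi 0) :=
  (integrableOn_kernelMajorant hα).mono'
    (((continuousOn_symKernel hz.continuous s).mono fun _ hξ => ne_of_gt hξ).aestronglyMeasurable
      measurableSet_Ioi)
    ((ae_restrict_iff' measurableSet_Ioi).mpr <| ae_of_all _ fun _ hξ =>
      abs_symKernel_le_kernelMajorant hα.le hz hH hK s hξ)

lemma abs_integral_symKernel_le (hα : 0 < α) (hz : Differentiable ℝ z)
    (hH : ∀ x y, |deriv z x - deriv z y| ≤ H * |x - y| ^ α)
    (hK : ∀ s ξ, |z (s + ξ) + z (s - ξ) - 2 * z s| ≤ K) (s : ℝ) :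
    |∫ ξ in Ioi 0, symKernel z s ξ| ≤ 2 ^ α * H / α + K := by
  rw [← integral_kernelMajorant hα, ← Real.norm_eq_abs]
  exact norm_integral_le_of_norm_le (integrableOn_kernelMajorant hα)
    ((ae_restrict_iff' measurableSet_Ioi).mpr <| ae_of_all _ fun _ hξ =>
      abs_symKernel_le_kernelMajorant hα.le hz hH hK s hξ)

end Majorant

lemma tendsto_pvIntegral_pvKernel {z : ℝ → ℝ} (hz : Continuous z) {s : ℝ}
    (hint : IntegrableOn (symKernel z s) (Ioi 0)) :
    Tendsto (fun q : ℝ × ℝ => ∫ ξ in {ξ : ℝ | q.1 ≤ |ξ| ∧ |ξ| ≤ q.2}, pvKernel z s ξ)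
      (𝓝[>] 0 ×ˢ atTop) (𝓝 (∫ ξ in Ioi 0, symKernel z s ξ)) := by
  refine (tendsto_setIntegral_Ioc_of_integrableOn_Ioi hint).congr' ?_
  filter_upwards [tendsto_fst.eventually (Ioo_mem_nhdsGT one_pos),
    tendsto_snd.eventually (eventually_ge_atTop 1)] with q hq₁ hq₂
  exact (setIntegral_le_abs_le_eq_Ioc_add_neg (continuousOn_pvKernel hz s) hq₁.1
    (hq₁.2.le.trans hq₂)).symm

lemma continuousOn_pvKernel_param {Z : ℝ → ℝ → ℝ} {S : Set ℝ}
    (hZ : ContinuousOn (fun q : ℝ × ℝ => Z q.1 q.2) (Prod.snd ⁻¹' S)) {ξ : ℝ} (hξ : ξ ≠ 0) :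
    ContinuousOn (fun q : ℝ × ℝ => pvKernel (fun y => Z y q.2) q.1 ξ) (Prod.snd ⁻¹' S) := by
  have hshift : ContinuousOn (fun q : ℝ × ℝ => Z (q.1 - ξ) q.2) (Prod.snd ⁻¹' S) :=
    hZ.comp (by fun_prop : Continuous fun q : ℝ × ℝ => (q.1 - ξ, q.2)).continuousOn
      fun _ hq => hq
  exact continuousOn_const.div (continuousOn_const.add ((hZ.sub hshift).pow 2))
    fun _ _ => by positivity

lemma continuousOn_symKernel_param {Z : ℝ → ℝ → ℝ} {S : Set ℝ}
    (hZ : ContinuousOn (fun q : ℝ × ℝ => Z q.1 q.2) (Prod.snd ⁻¹' S)) {ξ : ℝ} (hξ : ξ ≠ 0) :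
    ContinuousOn (fun q : ℝ × ℝ => symKernel (fun y => Z y q.2) q.1 ξ) (Prod.snd ⁻¹' S) :=
  (continuousOn_pvKernel_param hZ hξ).add (continuousOn_pvKernel_param hZ (neg_ne_zero.mpr hξ))

lemma continuousOn_integral_symKernel {α H K : ℝ} (hα : 0 < α) {Z : ℝ → ℝ → ℝ} {S : Set ℝ}
    (hZ : ContinuousOn (fun q : ℝ × ℝ => Z q.1 q.2) (Prod.snd ⁻¹' S))
    (hd : ∀ t ∈ S, Differentiable ℝ fun y => Z y t)
    (hH : ∀ t ∈ S, ∀ x y,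
      |deriv (fun y => Z y t) x - deriv (fun y => Z y t) y| ≤ H * |x - y| ^ α)
    (hK : ∀ t ∈ S, ∀ s ξ, |Z (s + ξ) t + Z (s - ξ) t - 2 * Z s t| ≤ K) :
    ContinuousOn (fun q : ℝ × ℝ => ∫ ξ in Ioi 0, symKernel (fun y => Z y q.2) q.1 ξ)
      (Prod.snd ⁻¹' S) := by
  intro q₀ hq₀
  refine continuousWithinAt_of_dominated (bound := kernelMajorant α H K) ?_ ?_
    (integrableOn_kernelMajorant hα) ?_
  · filter_upwards [self_mem_nhdsWithin] with q hq
    exact (integrableOn_symKernel hα (hd _ hq) (hH _ hq) (hK _ hq) q.1).aestronglyMeasurable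
  · filter_upwards [self_mem_nhdsWithin] with q hq
    exact (ae_restrict_iff' measurableSet_Ioi).mpr <| ae_of_all _ fun _ hξ =>
      abs_symKernel_le_kernelMajorant hα.le (hd _ hq) (hH _ hq) (hK _ hq) q.1 hξ
  · exact (ae_restrict_iff' measurableSet_Ioi).mpr <| ae_of_all _ fun _ hξ =>
      continuousOn_symKernel_param hZ (ne_of_gt hξ) q₀ hq₀

end PVKernel

open PVKernel in
/-- Lemma 3.6: existence, continuity and bound for the principal value
`I(s,t) = PV ∫ ξ/(ξ² + (z(s,t)-z(s-ξ,t))²) dξ`. -/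
theorem I_kernel_bound :
    ∀ α : ℝ, 0 < α → α < 1 →
    ∃ C : ℝ, 1 < C ∧
      ∀ (β T : ℝ) (ztil : ℝ → ℝ → ℝ), 0 < T →
        (∀ t ∈ Icc (0 : ℝ) T, ContDiff ℝ 1 (fun s => ztil s t) ∧
            hNorm α 1 (fun s => ztil s t) < ⊤) →
        (∀ t ∈ Icc (0 : ℝ) T,
            Tendsto (fun t' => hNorm α 1 (fun s => ztil s t' - ztil s t))
              (𝓝[Icc (0 : ℝ) T] t) (𝓝 0)) →
        (∃ M : ℝ≥0∞, M < ⊤ ∧ ∀ t ∈ Icc (0 : ℝ) T, hNorm α 1 (fun s => ztil s t) ≤ M) →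
        ∃ I : ℝ → ℝ → ℝ,
          (∀ s : ℝ, ∀ t ∈ Icc (0 : ℝ) T,
            Tendsto (fun q : ℝ × ℝ =>
                ∫ ξ in {ξ : ℝ | q.1 ≤ |ξ| ∧ |ξ| ≤ q.2},
                  ξ / (ξ ^ 2 + (lineFun2 β ztil s t - lineFun2 β ztil (s - ξ) t) ^ 2))
              ((𝓝[>] (0 : ℝ)) ×ˢ (atTop : Filter ℝ)) (𝓝 (I s t))) ∧
          ContinuousOn (fun q : ℝ × ℝ => I q.1 q.2) {q : ℝ × ℝ | q.2 ∈ Icc (0 : ℝ) T} ∧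
          (∀ s : ℝ, ∀ t ∈ Icc (0 : ℝ) T, ∀ A B H : ℝ,
            (∀ s', |ztil s' t| ≤ A) →
            (∀ s', |deriv (fun y => lineFun2 β ztil y t) s'| ≤ B) →
            (∀ s₁ s₂ : ℝ, |deriv (fun y => lineFun2 β ztil y t) s₁ -
                deriv (fun y => lineFun2 β ztil y t) s₂| ≤ H * |s₁ - s₂| ^ α) →
            |I s t| ≤ C * (A + B + H)) := by
  intro α hα _
  have hc : 0 ≤ 2 ^ α / α := by positivity
  refine ⟨4 + 2 ^ α / α, by linarith, ?_⟩
  rintro β T ztil - hreg hcont ⟨M, hM, hMb⟩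
  have hf (t) (ht : t ∈ Icc 0 T) : Differentiable ℝ fun s => ztil s t :=
    (hreg t ht).1.differentiable one_ne_zero
  have hz (t) (ht : t ∈ Icc 0 T) := differentiable_lineFun (β := β) (hf t ht)
  have hholder (t) (ht : t ∈ Icc 0 T) :=
    abs_deriv_lineFun_sub_le_of_hNorm_le (β := β) (hf t ht) hM.ne (hMb t ht)
  have hbound (t) (ht : t ∈ Icc 0 T) :=
    abs_secondDiff_lineFun_le (β := β) (abs_le_toReal_of_hNorm_le hM.ne (hMb t ht))
  have hjoint : ContinuousOn (fun q : ℝ × ℝ => ztil q.1 q.2) (Prod.snd ⁻¹' Icc 0 T) :=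
    continuousOn_uncurry_of_tendstoUniformly (fun t ht => (hreg t ht).1.continuous)
      fun t ht => tendstoUniformly_of_tendsto_hNorm_sub (hcont t ht)
  refine ⟨fun s t => ∫ ξ in Ioi 0, symKernel (lineFun β fun y => ztil y t) s ξ,
    fun s t ht => tendsto_pvIntegral_pvKernel (hz t ht).continuous
      (integrableOn_symKernel hα (hz t ht) (hholder t ht) (hbound t ht) s),
    continuousOn_integral_symKernel (Z := lineFun2 β ztil) hα
      ((continuousOn_const.mul continuous_fst.continuousOn).add hjoint)
      hz hholder hbound,
    fun s t ht A B H hA hB hH => ?_⟩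
  have hA0 : 0 ≤ A := (abs_nonneg _).trans (hA 0)
  have hB0 : 0 ≤ B := (abs_nonneg _).trans (hB 0)
  have hH0 : 0 ≤ H := nonneg_of_abs_sub_le_mul_rpow hH
  calc _ ≤ 2 ^ α * H / α + 4 * A :=
        abs_integral_symKernel_le hα (hz t ht) hH (abs_secondDiff_lineFun_le hA) s
    _ ≤ (4 + 2 ^ α / α) * (A + B + H) := by
        rw [mul_div_right_comm]
        nlinarith [mul_nonneg hc hA0, mul_nonneg hc hB0]
end
end
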